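/- arXiv:1505.05949 — 6 statements merged into one kernel-verified Lean document; each statement's English description precedes it below -/
import Mathlib

section
/- In a symmetric (v,k,λ)-covering with 2-regular excess, every point lies in exactly k blocks. -/
/-!
Counting the flags `(y, b)` with `y ≠ x` and `x, y ∈ b` in two ways gives `r_x (k - 1) = λ(v - 1) + 2`,
where `r_x` is the number of blocks through `x`; so all points have the same replication number `r`.
Counting point–block incidences gives `v r = v k`, since there are as many blocks as points.
-/

open Finset

section Incidence

variable {α ι : Type*} [Fintype α] [Fintype ι] [DecidableEq α] (blocks : ι → Finset α)

theorem sum_card_filter_mem_eq_sum_card :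
    ∑ x, #{b | x ∈ blocks b} = ∑ b, #(blocks b) := by
  simpa [bipartiteAbove, bipartiteBelow] using
    sum_card_bipartiteAbove_eq_sum_card_bipartiteBelow (s := univ) (t := univ)
      (fun x b => x ∈ blocks b)

theorem sum_card_filter_mem_mem_erase (x : α) :
    ∑ y ∈ univ.erase x, #{b | x ∈ blocks b ∧ y ∈ blocks b} =
      ∑ b with x ∈ blocks b, (#(blocks b) - 1) := by
  simp_rw [card_filter]
  rw [sum_comm, sum_filter]
  refine sum_congr rfl fun b _ => ?_
  by_cases hx : x ∈ blocks b
  · have : (univ.erase x).filter (· ∈ blocks b) = (blocks b).erase x := by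
      ext y
      simp [and_comm]
    simp only [hx, true_and, if_true, ← card_filter, this, card_erase_of_mem hx]
  · simp [hx]

theorem sum_card_filter_mem_mem_erase_of_card_eq {k : ℕ} (hsize : ∀ b, #(blocks b) = k)
    (x : α) :
    ∑ y ∈ univ.erase x, #{b | x ∈ blocks b ∧ y ∈ blocks b} =
      #{b | x ∈ blocks b} * (k - 1) := by
  rw [sum_card_filter_mem_mem_erase, sum_congr rfl fun b _ => by rw [hsize b], sum_const,
    smul_eq_mul]

end Incidence

theorem Finset.eq_of_sum_eq_card_mul_of_forall_eq {α : Type*} [Fintype α] {r : α → ℕ} {k : ℕ}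
    (hconst : ∀ x y, r x = r y) (hsum : ∑ x, r x = Fintype.card α * k) (x : α) :
    r x = k := by
  rw [sum_congr rfl fun y _ => hconst y x, sum_const, card_univ, smul_eq_mul] at hsum
  exact Nat.eq_of_mul_eq_mul_left (Fintype.card_pos_iff.mpr ⟨x⟩) hsum

theorem stmt_1_general (v k lam : ℕ) (hk : 2 ≤ k)
    (blocks : Fin v → Finset (Fin v))
    (hsize : ∀ b, (blocks b).card = k)
    (hreg : ∀ x : Fin v,
      ∑ y ∈ Finset.univ.erase x,
        (Finset.univ.filter fun b => x ∈ blocks b ∧ y ∈ blocks b).card = lam * (v - 1) + 2) :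
    ∀ x : Fin v, (Finset.univ.filter fun b => x ∈ blocks b).card = k := by
  have hrep : ∀ x : Fin v, #{b | x ∈ blocks b} * (k - 1) = lam * (v - 1) + 2 := fun x => by
    rw [← sum_card_filter_mem_mem_erase_of_card_eq blocks hsize, hreg]
  have hconst : ∀ x y : Fin v, #{b | x ∈ blocks b} = #{b | y ∈ blocks b} := fun x y =>
    Nat.eq_of_mul_eq_mul_right (by omega) ((hrep x).trans (hrep y).symm)
  have hsum : ∑ x : Fin v, #{b | x ∈ blocks b} = Fintype.card (Fin v) * k := by
    rw [sum_card_filter_mem_eq_sum_card, sum_congr rfl fun b _ => hsize b, sum_const, card_univ,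
      smul_eq_mul]
  exact eq_of_sum_eq_card_mul_of_forall_eq hconst hsum

/-- In a symmetric (v,k,λ)-covering with 2-regular excess, every point lies in exactly k blocks. -/
theorem stmt_1 (v k lam : ℕ) (hv : 0 < v) (hk : 2 ≤ k) (hl : 0 < lam)
    (blocks : Fin v → Finset (Fin v))
    (hsize : ∀ b, (blocks b).card = k)
    (hcov : ∀ x y : Fin v, x ≠ y →
      lam ≤ (Finset.univ.filter fun b => x ∈ blocks b ∧ y ∈ blocks b).card)
    (hreg : ∀ x : Fin v,
      ∑ y ∈ Finset.univ.erase x,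
        (Finset.univ.filter fun b => x ∈ blocks b ∧ y ∈ blocks b).card = lam * (v - 1) + 2) :
    ∀ x : Fin v, (Finset.univ.filter fun b => x ∈ blocks b).card = k :=
  stmt_1_general v k lam hk blocks hsize hreg
end

section
/- Let p be a prime and a a positive integer with p^α exactly or at least dividing a, written a = ā·p^α with ā not divisible by p. Define g_n(a) by g_1 = 1, g_2 = a, g_n = a·g_{n-1} − g_{n-2}. Then for every non-negative integer i: g_{2i}(a) ≡ (-1)^{i+1} · i · ā · p^α (mod p^{2α}) and g_{2i+1}(a) ≡ (-1)^i (mod p^{2α}). -/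
/-! Modulo `a ^ 2` the recurrence `g (n + 2) = a * g (n + 1) - g n` only sees `g (n + 1)`
modulo `a`, so the odd terms alternate `1, -1, …` and the even terms are `± i * a`.
The statement for `a = ā * p ^ α` follows because `p ^ (2 * α)` divides `a ^ 2`. -/

def g (a : ℤ) : ℕ → ℤ
  | 0 => 0
  | 1 => 1
  | n + 2 => a * g a (n + 1) - g a n

theorem g_add_two (a : ℤ) (n : ℕ) : g a (n + 2) = a * g a (n + 1) - g a n := rfl

theorem g_modEq_sq (a : ℤ) (i : ℕ) :
    g a (2 * i) ≡ (-1) ^ (i + 1) * i * a [ZMOD a ^ 2] ∧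
    g a (2 * i + 1) ≡ (-1) ^ i [ZMOD a ^ 2] := by
  induction i with
  | zero => simp [g]
  | succ i ih =>
    obtain ⟨h_even, h_odd⟩ := ih
    have h_idx : 2 * (i + 1) = 2 * i + 2 := by ring
    have h_even' : g a (2 * (i + 1)) ≡ (-1) ^ (i + 2) * (i + 1 : ℕ) * a [ZMOD a ^ 2] := by
      rw [h_idx, g_add_two]
      calc a * g a (2 * i + 1) - g a (2 * i)
          ≡ a * (-1) ^ i - (-1) ^ (i + 1) * i * a [ZMOD a ^ 2] :=
            (h_odd.mul_left a).sub h_even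
        _ = (-1) ^ (i + 2) * (i + 1 : ℕ) * a := by push_cast; ring
    refine ⟨h_even', ?_⟩
    rw [show 2 * (i + 1) + 1 = 2 * i + 1 + 2 by ring, g_add_two, ← h_idx]
    calc a * g a (2 * (i + 1)) - g a (2 * i + 1)
        ≡ a * ((-1) ^ (i + 2) * (i + 1 : ℕ) * a) - (-1) ^ i [ZMOD a ^ 2] :=
          (h_even'.mul_left a).sub h_odd
      _ = (-1) ^ (i + 1) + a ^ 2 * ((-1) ^ (i + 2) * (i + 1 : ℕ)) := by ring
      _ ≡ (-1) ^ (i + 1) [ZMOD a ^ 2] := Int.modEq_add_fac_self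

theorem stmt_4_general (p : ℕ) (a abar : ℤ) (α : ℕ)
    (ha : a = abar * (p : ℤ) ^ α) (i : ℕ) :
    (g a (2 * i) ≡ (-1) ^ (i + 1) * i * abar * (p : ℤ) ^ α [ZMOD ((p : ℤ) ^ (2 * α))]) ∧
    (g a (2 * i + 1) ≡ (-1) ^ i [ZMOD ((p : ℤ) ^ (2 * α))]) := by
  have h_sq : a ^ 2 = abar ^ 2 * (p : ℤ) ^ (2 * α) := by rw [ha]; ring
  obtain ⟨h_even, h_odd⟩ := g_modEq_sq a i
  rw [h_sq] at h_even h_odd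
  refine ⟨?_, h_odd.of_mul_left _⟩
  simpa only [ha, mul_assoc] using h_even.of_mul_left _

/-- If a = ā·p^α with p ∤ ā, then g_{2i} ≡ (-1)^{i+1}·i·ā·p^α and
    g_{2i+1} ≡ (-1)^i, both mod p^{2α}. -/
theorem stmt_4 (p : ℕ) (hp : p.Prime) (a abar : ℤ) (α : ℕ) (hα : 1 ≤ α) (hpos : 0 < a)
    (ha : a = abar * (p : ℤ) ^ α) (habar : ¬ (p : ℤ) ∣ abar) (i : ℕ) :
    (g a (2 * i) ≡ (-1) ^ (i + 1) * i * abar * (p : ℤ) ^ α [ZMOD ((p : ℤ) ^ (2 * α))]) ∧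
    (g a (2 * i + 1) ≡ (-1) ^ i [ZMOD ((p : ℤ) ^ (2 * α))]) :=
  stmt_4_general p a abar α ha i
end

section
/- Let p be an odd prime and a, n positive integers with a > 2, p | a+2, and p | n. Write a + 2 = s·p^α with p ∤ s and n = n̄·p^δ with p ∤ n̄. If (p, α) ≠ (3, 1), then g_n(a) = ḡ·p^δ for some integer ḡ with ḡ ≡ (-1)^{n+1}·n̄ (mod p), where g_n is defined by g_1 = 1, g_2 = a, g_n = a·g_{n-1} − g_{n-2}. -/
theorem Nat.pow_succ_dvd_choose_mul_pow {p n m δ e : ℕ} (hp : p.Prime) (hn : p ^ δ ∣ n)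
    (hm : m ≠ 0) (hme : m < p ^ e) : p ^ (δ + 1) ∣ n.choose m * p ^ e := by
  rcases (n.choose m).eq_zero_or_pos with hC | hC
  · simp [hC]
  have hmn : m ≤ n := by
    by_contra h
    simp [Nat.choose_eq_zero_of_lt (not_le.mp h)] at hC
  have hdvd : p ^ δ ∣ m * n.choose m := by
    obtain ⟨n, rfl⟩ : ∃ k, n = k + 1 := Nat.exists_eq_succ_of_ne_zero (by omega)
    obtain ⟨m, rfl⟩ : ∃ k, m = k + 1 := Nat.exists_eq_succ_of_ne_zero hm
    rw [mul_comm, ← Nat.add_one_mul_choose_eq]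
    exact hn.mul_right _
  have hv : m.factorization p < e := by
    have := (Nat.ordProj_le p hm).trans_lt hme
    exact (Nat.pow_lt_pow_iff_right hp.one_lt).mp this
  rw [hp.pow_dvd_iff_le_factorization (mul_ne_zero hm hC.ne'),
    Nat.factorization_mul hm hC.ne'] at hdvd
  have hpe : p ^ e ≠ 0 := pow_ne_zero _ hp.ne_zero
  rw [hp.pow_dvd_iff_le_factorization (mul_ne_zero hC.ne' hpe), Nat.factorization_mul hC.ne' hpe,
    hp.factorization_pow]
  simp only [Finsupp.add_apply, Finsupp.single_eq_same] at hdvd ⊢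
  omega

theorem Nat.two_mul_add_one_lt_pow {q i : ℕ} (hq : 5 ≤ q) (hi : i ≠ 0) : 2 * i + 1 < q ^ i := by
  have h : (1 + i * 4 : ℤ) ≤ (1 + 4) ^ i := one_add_mul_le_pow (by norm_num) i
  have : 1 + i * 4 ≤ 5 ^ i := by exact_mod_cast h
  have := Nat.pow_le_pow_left hq i
  omega

theorem Nat.Prime.five_le_pow {p α : ℕ} (hp : p.Prime) (hp2 : p ≠ 2) (hα : α ≠ 0)
    (hpα : (p, α) ≠ (3, 1)) : 5 ≤ p ^ α := by
  have hp3 : 3 ≤ p := lt_of_le_of_ne hp.two_le (Ne.symm hp2)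
  rcases eq_or_ne p 3 with rfl | hp3'
  · have : 2 ≤ α := by grind
    calc 5 ≤ 3 ^ 2 := by norm_num
      _ ≤ 3 ^ α := Nat.pow_le_pow_right (by norm_num) this
  · have : p ≠ 4 := by rintro rfl; norm_num at hp
    calc 5 ≤ p := by omega
      _ ≤ p ^ α := Nat.le_self_pow hα p

namespace Zsqrtd

variable {d : ℤ}

theorem im_sqrtd_pow_two_mul (i : ℕ) : ((sqrtd : ℤ√d) ^ (2 * i)).im = 0 := by
  rw [pow_mul, sq, dmuld, ← Int.cast_pow, im_intCast]

theorem im_sqrtd_pow_two_mul_add_one (i : ℕ) : ((sqrtd : ℤ√d) ^ (2 * i + 1)).im = d ^ i := by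
  rw [pow_succ, pow_mul, sq, dmuld, ← Int.cast_pow, im_smul, im_sqrtd, mul_one]

theorem im_intCast_add_sqrtd_pow (a : ℤ) (n : ℕ) :
    (((a : ℤ√d) + sqrtd) ^ n).im =
      ∑ k ∈ Finset.range (n + 1), ((sqrtd : ℤ√d) ^ k).im * a ^ (n - k) * n.choose k := by
  rw [add_comm, add_pow, ← AddMonoidHom.mk'_apply (f := im) im_add, map_sum]
  refine Finset.sum_congr rfl fun k _ => ?_
  rw [AddMonoidHom.mk'_apply, mul_assoc, ← Int.cast_pow, ← Int.cast_natCast, ← Int.cast_mul,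
    mul_comm, im_smul]
  ring

theorem im_intCast_add_sqrtd_pow_succ_modEq {m : ℤ} (a : ℤ) (n : ℕ)
    (h : ∀ i ≠ 0, m ∣ (n + 1).choose (2 * i + 1) * d ^ i) :
    (((a : ℤ√d) + sqrtd) ^ (n + 1)).im ≡ (n + 1) * a ^ n [ZMOD m] := by
  rw [im_intCast_add_sqrtd_pow,
    ← Finset.add_sum_erase _ _ (Finset.mem_range.2 (by omega : 1 < n + 2))]
  have hrest : m ∣ ∑ k ∈ (Finset.range (n + 2)).erase 1,
      ((sqrtd : ℤ√d) ^ k).im * a ^ (n + 1 - k) * (n + 1).choose k := by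
    refine Finset.dvd_sum fun k hk => ?_
    obtain ⟨hk1, -⟩ := Finset.mem_erase.1 hk
    obtain ⟨i, rfl | rfl⟩ := Nat.even_or_odd' k
    · simp [im_sqrtd_pow_two_mul]
    · rw [im_sqrtd_pow_two_mul_add_one]
      exact (h i (by omega)).trans ⟨a ^ (n + 1 - (2 * i + 1)), by ring⟩
  calc _ ≡ ((sqrtd : ℤ√d) ^ 1).im * a ^ (n + 1 - 1) * (n + 1).choose 1 + 0 [ZMOD m] :=
        hrest.modEq_zero_int.add_left _
    _ = (n + 1) * a ^ n := by simp [mul_comm]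

theorem sq_intCast_add_sqrtd (a : ℤ) :
    ((a : ℤ√(a ^ 2 - 4)) + sqrtd) ^ 2 =
      2 * (a : ℤ√(a ^ 2 - 4)) * ((a : ℤ√(a ^ 2 - 4)) + sqrtd) - 4 := by
  have h : sqrtd * sqrtd = ((a ^ 2 - 4 : ℤ) : ℤ√(a ^ 2 - 4)) := dmuld
  push_cast at h
  linear_combination h

end Zsqrtd

open Zsqrtd in
theorem two_mul_im_intCast_add_sqrtd_pow (a : ℤ) (n : ℕ) :
    2 * (((a : ℤ√(a ^ 2 - 4)) + sqrtd) ^ n).im = 2 ^ n * g a n := by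
  set ω : ℤ√(a ^ 2 - 4) := (a : ℤ√(a ^ 2 - 4)) + sqrtd
  induction n using Nat.twoStepInduction with
  | zero => simp [g]
  | one => simp [ω, g]
  | more n ih₀ ih₁ =>
    have hrec : ω ^ (n + 2) =
        ((2 * a : ℤ) : ℤ√(a ^ 2 - 4)) * ω ^ (n + 1) - ((4 : ℤ) : ℤ√(a ^ 2 - 4)) * ω ^ n := by
      rw [pow_add, sq_intCast_add_sqrtd]
      push_cast
      ring
    rw [hrec, im_sub, im_smul, im_smul, show g a (n + 2) = a * g a (n + 1) - g a n from rfl]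
    linear_combination 2 * a * ih₁ - 4 * ih₀

theorem Int.exists_eq_mul_pow_and_modEq {p u x y : ℤ} {δ : ℕ} (hp : p ≠ 0) (hu : IsCoprime u p)
    (h : u * x ≡ p ^ δ * (u * y) [ZMOD p ^ (δ + 1)]) : ∃ z, x = z * p ^ δ ∧ z ≡ y [ZMOD p] := by
  have hx : p ^ δ ∣ x := by
    have : p ^ δ ∣ u * x := ((h.of_dvd (pow_dvd_pow p δ.le_succ)).dvd_iff).2 (dvd_mul_right _ _)
    exact hu.pow_right.symm.dvd_of_dvd_mul_left this
  obtain ⟨z, rfl⟩ := hx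
  refine ⟨z, mul_comm _ _, ?_⟩
  rw [pow_succ, mul_left_comm, Int.ModEq.mul_left_cancel_iff' (pow_ne_zero _ hp),
    Int.modEq_iff_dvd, ← mul_sub] at h
  exact Int.modEq_iff_dvd.2 (hu.symm.dvd_of_dvd_mul_left h)

theorem stmt_9_general (p : ℕ) (hp : p.Prime) (hp2 : p ≠ 2) (a : ℤ)
    (n s α nbar δ : ℕ) (hα : 1 ≤ α) (ha2 : a + 2 = (s : ℤ) * (p : ℤ) ^ α)
    (hnbar : ¬ p ∣ nbar) (hn : n = nbar * p ^ δ)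
    (hpa : (p, α) ≠ (3, 1)) :
    ∃ gbar : ℤ, g a n = gbar * (p : ℤ) ^ δ ∧
      gbar ≡ (-1) ^ (n + 1) * nbar [ZMOD (p : ℤ)] := by
  have hα0 : α ≠ 0 := by omega
  have hnbar0 : nbar ≠ 0 := by rintro rfl; exact hnbar (dvd_zero p)
  obtain ⟨m, rfl⟩ : ∃ m, n = m + 1 :=
    Nat.exists_eq_succ_of_ne_zero (by simp [hn, hnbar0, hp.ne_zero])
  have hpa2 : (p : ℤ) ∣ a + 2 := (dvd_pow_self _ hα0).trans ⟨s, by rw [ha2]; ring⟩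
  have hd : (p : ℤ) ^ α ∣ a ^ 2 - 4 := ⟨s * (a - 2), by linear_combination (a - 2) * ha2⟩
  have hterms : ∀ i ≠ 0, (p : ℤ) ^ (δ + 1) ∣ (m + 1).choose (2 * i + 1) * (a ^ 2 - 4) ^ i := by
    intro i hi
    have hlt : 2 * i + 1 < p ^ (α * i) := by
      rw [pow_mul]; exact Nat.two_mul_add_one_lt_pow (hp.five_le_pow hp2 hα0 hpa) hi
    have hdvd : (p : ℤ) ^ (δ + 1) ∣ (m + 1).choose (2 * i + 1) * (p : ℤ) ^ (α * i) := by
      exact_mod_cast Nat.pow_succ_dvd_choose_mul_pow hp (hn ▸ dvd_mul_left _ _) (by omega) hlt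
    exact hdvd.trans (mul_dvd_mul_left _ (by rw [pow_mul]; exact pow_dvd_pow_of_dvd hd i))
  have hcong : 2 ^ (m + 1) * g a (m + 1) ≡ 2 * ((m + 1) * a ^ m) [ZMOD p ^ (δ + 1)] := by
    rw [← two_mul_im_intCast_add_sqrtd_pow]
    exact (Zsqrtd.im_intCast_add_sqrtd_pow_succ_modEq a m hterms).mul_left 2
  have ha : a ≡ -2 [ZMOD p] := (Int.modEq_iff_dvd.2 (by simpa using hpa2)).symm
  have hcoprime : IsCoprime ((2 : ℤ) ^ (m + 1)) p :=
    (Nat.isCoprime_iff_coprime.2 ((Nat.coprime_primes Nat.prime_two hp).2 hp2.symm)).pow_left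
  refine Int.exists_eq_mul_pow_and_modEq (by exact_mod_cast hp.ne_zero) hcoprime (hcong.trans ?_)
  have hN : ((m : ℤ) + 1) = nbar * p ^ δ := by exact_mod_cast hn
  calc 2 * ((m + 1) * a ^ m) = 2 * nbar * p ^ δ * a ^ m := by rw [hN]; ring
    _ ≡ 2 * nbar * p ^ δ * (-2) ^ m [ZMOD p ^ (δ + 1)] :=
      ((ha.pow m).mul_left' (c := 2 * nbar * p ^ δ)).of_dvd ⟨2 * nbar, by ring⟩
    _ = p ^ δ * (2 ^ (m + 1) * ((-1) ^ (m + 1 + 1) * nbar)) := by rw [neg_pow]; ring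

/-- If p is an odd prime, a+2 = s·p^α (p ∤ s), n = n̄·p^δ (p ∤ n̄), and (p,α) ≠ (3,1),
    then g_n(a) = ḡ·p^δ with ḡ ≡ (-1)^{n+1}·n̄ (mod p). -/
theorem stmt_9 (p : ℕ) (hp : p.Prime) (hp2 : p ≠ 2) (a : ℤ) (ha : 2 < a)
    (n s α nbar δ : ℕ) (hs : ¬ p ∣ s) (hα : 1 ≤ α) (ha2 : a + 2 = (s : ℤ) * (p : ℤ) ^ α)
    (hnbar : ¬ p ∣ nbar) (hδ : 1 ≤ δ) (hn : n = nbar * p ^ δ)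
    (hpa : (p, α) ≠ (3, 1)) :
    ∃ gbar : ℤ, g a n = gbar * (p : ℤ) ^ δ ∧
      gbar ≡ (-1) ^ (n + 1) * nbar [ZMOD (p : ℤ)] :=
  stmt_9_general p hp hp2 a n s α nbar δ hα ha2 hnbar hn hpa
end

section
/- Let v, k, λ be positive integers with k > λ + 2 and v = (k(k−1)−2)/λ + 1, and let p be an odd prime dividing k − λ + 2. Then p divides v if and only if λ ≡ 2 (mod p). -/
/-!
Since `k - λ + 2` divides `λ v - (λ - 2)²`, a prime `p` dividing `k - λ + 2` divides `λ v` exactly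
when it divides `λ - 2`; and for odd `p` it cannot divide both `λ` and `λ - 2`.
-/

theorem mul_eq_sq_sub_two_add_of_mul_sub_one_eq {R : Type*} [CommRing R] {l v k : R}
    (h : l * (v - 1) = k * (k - 1) - 2) :
    l * v = (l - 2) ^ 2 + (k - l + 2) * (k + l - 3) := by
  linear_combination h

theorem Prime.dvd_iff_dvd_sub_two_of_mul_eq_sq_add {R : Type*} [CommRing R] {p l v d m : R}
    (hp : Prime p) (hp2 : ¬p ∣ 2) (hd : p ∣ d) (h : l * v = (l - 2) ^ 2 + d * m) :
    p ∣ v ↔ p ∣ l - 2 := by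
  constructor
  · intro hv
    have hsq : p ∣ (l - 2) ^ 2 := by
      have := dvd_sub (hv.mul_left l) (hd.mul_right m)
      rwa [h, add_sub_cancel_right] at this
    exact hp.dvd_of_dvd_pow hsq
  · intro hl2
    have hlv : p ∣ l * v := h ▸ dvd_add (dvd_pow hl2 two_ne_zero) (hd.mul_right m)
    refine (hp.dvd_mul.mp hlv).resolve_left fun hl => hp2 ?_
    simpa using dvd_sub hl hl2

theorem stmt_11_general (v k lam : ℕ)
    (hveq : (lam : ℤ) * ((v : ℤ) - 1) = (k : ℤ) * ((k : ℤ) - 1) - 2)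
    (p : ℕ) (hp : p.Prime) (hp2 : p ≠ 2)
    (hdvd : (p : ℤ) ∣ ((k : ℤ) - (lam : ℤ) + 2)) :
    (p : ℤ) ∣ (v : ℤ) ↔ (lam : ℤ) ≡ 2 [ZMOD (p : ℤ)] := by
  have hp_not_dvd_two : ¬(p : ℤ) ∣ 2 := fun h =>
    hp2 <| (Nat.prime_dvd_prime_iff_eq hp Nat.prime_two).mp (Int.natCast_dvd_natCast.mp h)
  rw [Int.modEq_comm, Int.modEq_iff_dvd]
  exact (Nat.prime_iff_prime_int.mp hp).dvd_iff_dvd_sub_two_of_mul_eq_sq_add hp_not_dvd_two hdvd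
    (mul_eq_sq_sub_two_add_of_mul_sub_one_eq hveq)

/-- If k > λ+2, λ(v-1) = k(k-1)-2, and p is an odd prime dividing k-λ+2,
    then p ∣ v iff λ ≡ 2 (mod p). -/
theorem stmt_11 (v k lam : ℕ) (hv : 0 < v) (hl : 0 < lam) (hk : lam + 2 < k)
    (hveq : (lam : ℤ) * ((v : ℤ) - 1) = (k : ℤ) * ((k : ℤ) - 1) - 2)
    (p : ℕ) (hp : p.Prime) (hp2 : p ≠ 2)
    (hdvd : (p : ℤ) ∣ ((k : ℤ) - (lam : ℤ) + 2)) :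
    (p : ℤ) ∣ (v : ℤ) ↔ (lam : ℤ) ≡ 2 [ZMOD (p : ℤ)] :=
  stmt_11_general v k lam hveq p hp hp2 hdvd
end

section
/- Let v, k, λ be positive integers with λ < k < v. If there exists a symmetric (v,k,λ)-covering whose excess is 2-regular with cycle type [c_1,...,c_t], then for some ordering of points and blocks, the incidence matrix A (a v×v 0-1 matrix) satisfies A·Aᵀ = diag(B_{c_1}(k−λ),...,B_{c_t}(k−λ)) + λ·J_v. Consequently det(diag(B_{c_1}(k−λ),...,B_{c_t}(k−λ)) + λ·J_v) is a perfect square. -/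
/-- B_n(a): a·I plus the adjacency matrix of an n-cycle (off-diagonal entries 2 when n = 2). -/
def cycleMat (n : ℕ) (a : ℤ) : Matrix (Fin n) (Fin n) ℤ :=
  Matrix.of fun j k =>
    (if j = k then a else 0) + (if ((j : ℕ) + 1) % n = (k : ℕ) then 1 else 0) +
      (if ((k : ℕ) + 1) % n = (j : ℕ) then 1 else 0)

open scoped Matrix

-- For `n = 1` the cycle is a loop and the diagonal entry would be `a + 2`.
lemma cycleMat_apply_self {n : ℕ} (hn : 2 ≤ n) (a : ℤ) (j : Fin n) : cycleMat n a j j = a := by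
  have hsucc : ((j : ℕ) + 1) % n ≠ j := by
    rcases Nat.lt_or_ge ((j : ℕ) + 1) n with hlt | hge
    · rw [Nat.mod_eq_of_lt hlt]; omega
    · rw [show (j : ℕ) + 1 = n by omega, Nat.mod_self]; omega
  simp [cycleMat, hsucc]

lemma cycleMat_apply_of_ne (n : ℕ) (a : ℤ) {j k : Fin n} (h : j ≠ k) :
    cycleMat n a j k = cycleMat n 0 j k := by
  simp [cycleMat, h]

lemma blockDiagonal'_cycleMat_apply {t : ℕ} {c : Fin t → ℕ} (hc : ∀ i, 2 ≤ c i) (a : ℤ)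
    (x y : Σ i, Fin (c i)) :
    Matrix.blockDiagonal' (fun i => cycleMat (c i) a) x y =
      if x = y then a else Matrix.blockDiagonal' (fun i => cycleMat (c i) 0) x y := by
  obtain ⟨i, j⟩ := x
  obtain ⟨i', j'⟩ := y
  split_ifs with hxy
  · cases hxy
    rw [Matrix.blockDiagonal'_apply_eq, cycleMat_apply_self (hc i)]
  · rw [Matrix.blockDiagonal'_apply', Matrix.blockDiagonal'_apply']
    split
    · next hii' =>
      subst hii'
      exact cycleMat_apply_of_ne _ a fun hjj' => hxy (by rw [cast_eq] at hjj'; rw [hjj'])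
    · rfl

section Incidence

variable {α β ι κ : Type*} [DecidableEq α] [Fintype β] [Fintype κ]

def incidenceMatrix (blocks : β → Finset α) (σ : ι ≃ α) (τ : κ ≃ β) : Matrix ι κ ℤ :=
  Matrix.of fun x b => if σ x ∈ blocks (τ b) then 1 else 0

lemma incidenceMatrix_mul_transpose_apply (blocks : β → Finset α)
    (σ : ι ≃ α) (τ : κ ≃ β) (x y : ι) :
    (incidenceMatrix blocks σ τ * (incidenceMatrix blocks σ τ)ᵀ) x y =
      (Finset.univ.filter fun b => σ x ∈ blocks b ∧ σ y ∈ blocks b).card := by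
  simp only [incidenceMatrix, Matrix.mul_apply, Matrix.transpose_apply, Matrix.of_apply,
    ite_zero_mul_ite_zero, mul_one]
  rw [Equiv.sum_comp τ (fun b => if σ x ∈ blocks b ∧ σ y ∈ blocks b then (1 : ℤ) else 0),
    Finset.sum_boole]

end Incidence

lemma isSquare_det_mul_transpose {n R : Type*} [Fintype n] [DecidableEq n] [CommRing R]
    (A : Matrix n n R) : IsSquare (A * Aᵀ).det :=
  ⟨A.det, by rw [Matrix.det_mul, Matrix.det_transpose]⟩

theorem stmt_14_general (v k lam t : ℕ)
    (c : Fin t → ℕ) (hc : ∀ i, 2 ≤ c i)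
    (blocks : Fin v → Finset (Fin v))
    (hrep : ∀ x : Fin v, (Finset.univ.filter fun b => x ∈ blocks b).card = k)
    (ρ : (Σ i : Fin t, Fin (c i)) ≃ Fin v)
    (hexcess : ∀ x y : Σ i : Fin t, Fin (c i), x ≠ y →
      ((Finset.univ.filter fun b => ρ x ∈ blocks b ∧ ρ y ∈ blocks b).card : ℤ) =
        (lam : ℤ) + Matrix.blockDiagonal' (fun i => cycleMat (c i) 0) x y) :
    ∃ σ τ : (Σ i : Fin t, Fin (c i)) ≃ Fin v,
      (Matrix.of fun x b => if σ x ∈ blocks (τ b) then (1 : ℤ) else 0) *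
          Matrix.transpose (Matrix.of fun x b => if σ x ∈ blocks (τ b) then (1 : ℤ) else 0) =
        Matrix.blockDiagonal' (fun i => cycleMat (c i) ((k : ℤ) - (lam : ℤ))) +
          Matrix.of (fun _ _ => (lam : ℤ)) ∧
      IsSquare (Matrix.blockDiagonal' (fun i => cycleMat (c i) ((k : ℤ) - (lam : ℤ))) +
          Matrix.of (fun _ _ => (lam : ℤ))).det := by
  have hgram : incidenceMatrix blocks ρ ρ * (incidenceMatrix blocks ρ ρ)ᵀ =
      Matrix.blockDiagonal' (fun i => cycleMat (c i) ((k : ℤ) - (lam : ℤ))) +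
        Matrix.of (fun _ _ => (lam : ℤ)) := by
    ext x y
    rw [incidenceMatrix_mul_transpose_apply, Matrix.add_apply, Matrix.of_apply,
      blockDiagonal'_cycleMat_apply hc]
    split_ifs with hxy
    · subst hxy
      simp only [and_self, hrep]
      ring
    · rw [hexcess x y hxy, add_comm]
  refine ⟨ρ, ρ, hgram, ?_⟩
  rw [← hgram]
  exact isSquare_det_mul_transpose _

/-- If a symmetric (v,k,λ)-covering has 2-regular excess of cycle type [c_1,...,c_t],
    then for some ordering of points and blocks the incidence matrix A satisfies
    A·Aᵀ = diag(B_{c_1}(k-λ),...,B_{c_t}(k-λ)) + λJ, and the determinant of the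
    latter matrix is a perfect square. -/
theorem stmt_14 (v k lam t : ℕ) (hlk : lam < k) (hkv : k < v)
    (c : Fin t → ℕ) (hc : ∀ i, 2 ≤ c i) (hsum : ∑ i, c i = v)
    (blocks : Fin v → Finset (Fin v))
    (hsize : ∀ b, (blocks b).card = k)
    (hrep : ∀ x : Fin v, (Finset.univ.filter fun b => x ∈ blocks b).card = k)
    (hcov : ∀ x y : Fin v, x ≠ y →
      lam ≤ (Finset.univ.filter fun b => x ∈ blocks b ∧ y ∈ blocks b).card)
    (ρ : (Σ i : Fin t, Fin (c i)) ≃ Fin v)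
    (hexcess : ∀ x y : Σ i : Fin t, Fin (c i), x ≠ y →
      ((Finset.univ.filter fun b => ρ x ∈ blocks b ∧ ρ y ∈ blocks b).card : ℤ) =
        (lam : ℤ) + Matrix.blockDiagonal' (fun i => cycleMat (c i) 0) x y) :
    ∃ σ τ : (Σ i : Fin t, Fin (c i)) ≃ Fin v,
      (Matrix.of fun x b => if σ x ∈ blocks (τ b) then (1 : ℤ) else 0) *
          Matrix.transpose (Matrix.of fun x b => if σ x ∈ blocks (τ b) then (1 : ℤ) else 0) =
        Matrix.blockDiagonal' (fun i => cycleMat (c i) ((k : ℤ) - (lam : ℤ))) +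
          Matrix.of (fun _ _ => (lam : ℤ)) ∧
      IsSquare (Matrix.blockDiagonal' (fun i => cycleMat (c i) ((k : ℤ) - (lam : ℤ))) +
          Matrix.of (fun _ _ => (lam : ℤ))).det :=
  stmt_14_general v k lam t c hc blocks hrep ρ hexcess
end

section
/- For any integer a > 2 and any n ≥ 2, there exists a polynomial h with integer coefficients such that det(B_n(a)) = (a+2)·h(a)² if n is odd, and det(B_n(a)) = (a²−4)·h(a)² if n is even, where B_n(a) is a·I plus the adjacency matrix of an n-cycle (with off-diagonal entries 2 for n = 2). -/
namespace Polynomial.Chebyshev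

variable {R : Type*} [CommRing R] {x y : R}

theorem S_eval_add_mul_sub (h : x * y = 1) :
    ∀ n : ℕ, (S R n).eval (x + y) * (x - y) = x ^ (n + 1) - y ^ (n + 1)
  | 0 => by simp
  | 1 => by simp only [Nat.cast_one, S_one, eval_X]; ring
  | n + 2 => by
    have h₁ := S_eval_add_mul_sub h n
    have h₂ := S_eval_add_mul_sub h (n + 1)
    push_cast at h₂ ⊢
    simp only [S_add_two, eval_sub, eval_mul, eval_X]
    linear_combination (x + y) * h₂ - h₁ + (x ^ (n + 1) - y ^ (n + 1)) * h

theorem S_sub_S_eval_add_mul_add_one (h : x * y = 1) :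
    ∀ n : ℕ, (S R n - S R (n - 1)).eval (x + y) * (x + 1) = x ^ (n + 1) + y ^ n
  | 0 => by simp
  | 1 => by
    simp only [Nat.cast_one, S_one, sub_self, S_zero, eval_sub, eval_X, eval_one, Nat.reduceAdd,
      pow_one]
    linear_combination h
  | n + 2 => by
    have h₀ := congrArg (eval (x + y)) (S_add_one R n)
    have h₁ := S_sub_S_eval_add_mul_add_one h n
    have h₂ := S_sub_S_eval_add_mul_add_one h (n + 1)
    push_cast at h₂ ⊢
    rw [show (n : ℤ) + 2 - 1 = n + 1 by ring]
    simp only [add_sub_cancel_right, S_add_two, eval_sub, eval_mul, eval_X] at h₀ h₁ h₂ ⊢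
    linear_combination (x + y) * h₂ - h₁ + (x ^ (n + 1) + y ^ n) * h - (x + 1) * h₀

theorem pow_add_pow_sub_two_eq_mul_S_eval_sq (h : x * y = 1) (r : ℕ) :
    x ^ (2 * r + 2) + y ^ (2 * r + 2) - 2 = ((x + y) ^ 2 - 4) * (S R r).eval (x + y) ^ 2 := by
  have hS := S_eval_add_mul_sub h r
  have hxy : (x * y) ^ (r + 1) = 1 := by rw [h, one_pow]
  linear_combination 2 * hxy - 4 * (S R r).eval (x + y) ^ 2 * h
    - ((S R r).eval (x + y) * (x - y) + x ^ (r + 1) - y ^ (r + 1)) * hS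

theorem pow_add_pow_add_two_eq_mul_S_sub_S_eval_sq (h : x * y = 1) (r : ℕ) :
    x ^ (2 * r + 1) + y ^ (2 * r + 1) + 2 =
      (x + y + 2) * (S R r - S R (r - 1)).eval (x + y) ^ 2 := by
  have hx := S_sub_S_eval_add_mul_add_one h r
  have hy := S_sub_S_eval_add_mul_add_one (mul_comm x y ▸ h) r
  rw [add_comm y x] at hy
  have hxy₀ : (x * y) ^ r = 1 := by rw [h, one_pow]
  have hxy₁ : (x * y) ^ (r + 1) = 1 := by rw [h, one_pow]
  set u := (S R r - S R (r - 1)).eval (x + y)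
  linear_combination -hxy₀ - hxy₁ + u ^ 2 * h - u * (y + 1) * hx - (x ^ (r + 1) + y ^ r) * hy

end Polynomial.Chebyshev

open Polynomial in
theorem IsAlgClosed.exists_mul_eq_one_and_add_eq {k : Type*} [Field k] [IsAlgClosed k] (t : k) :
    ∃ x y : k, x * y = 1 ∧ x + y = t := by
  obtain ⟨x, hx⟩ := IsAlgClosed.exists_root (C 1 * X ^ 2 + C (-t) * X + C 1)
    (by rw [degree_quadratic one_ne_zero]; decide)
  refine ⟨x, t - x, ?_, add_sub_cancel _ _⟩
  simp only [IsRoot, eval_add, eval_mul, eval_C, eval_pow, eval_X] at hx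
  linear_combination -hx

open Equiv Matrix

theorem Equiv.Perm.eq_one_or_eq_of_forall_apply_eq_or_eq {α : Type*} {σ τ : Perm α}
    (hτ : ∀ i j, ∃ k : ℕ, (τ ^ k) i = j) (h : ∀ i, σ i = i ∨ σ i = τ i) : σ = 1 ∨ σ = τ := by
  by_cases hid : ∀ i, σ i = i
  · exact .inl (Perm.ext hid)
  push Not at hid
  obtain ⟨i₀, hi₀⟩ := hid
  have hpow : ∀ k : ℕ, σ ((τ ^ k) i₀) = τ ((τ ^ k) i₀) := by
    intro k
    induction k with
    | zero => simpa using (h i₀).resolve_left hi₀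
    | succ k ih =>
      rw [pow_succ', Perm.mul_apply]
      rcases h (τ ((τ ^ k) i₀)) with hfix | hmove
      · have hτfix : τ ((τ ^ k) i₀) = (τ ^ k) i₀ := σ.injective (hfix.trans ih.symm)
        rw [hτfix, ih]
      · exact hmove
  refine .inr (Perm.ext fun j => ?_)
  obtain ⟨k, rfl⟩ := hτ i₀ j
  exact hpow k

theorem exists_pow_finRotate_apply_eq {n : ℕ} (i j : Fin n) :
    ∃ k : ℕ, (finRotate n ^ k) i = j := by
  have := NeZero.of_pos i.pos
  exact ⟨(j - i).val, by rw [Perm.coe_pow, ← finCycle_eq_finRotate_iterate, finCycle_apply,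
    add_sub_cancel]⟩

theorem Matrix.det_smul_one_add_permMatrix_finRotate {R : Type*} [CommRing R] (m : ℕ) (c : R) :
    det (c • 1 + (finRotate (m + 2)).permMatrix R) = c ^ (m + 2) + (-1) ^ (m + 1) := by
  set τ := finRotate (m + 2)
  have hτ : ∀ i, τ i ≠ i := fun i => by simp [τ, finRotate_apply]
  have hentry : ∀ i j, (c • 1 + τ.permMatrix R) i j =
      (if i = j then c else 0) + (if τ i = j then 1 else 0) := fun i j => by
    simp [one_apply, PEquiv.toMatrix_apply]
  have hsupp : ∀ σ ∈ (Finset.univ : Finset (Perm (Fin (m + 2)))), σ ∉ ({1, τ} : Finset _) →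
      Perm.sign σ • ∏ i, (c • 1 + τ.permMatrix R)ᵀ (σ i) i = 0 := by
    intro σ _ hσ
    have hσ' : ¬ (σ = 1 ∨ σ = τ) := by simpa using hσ
    obtain ⟨i, hi₁, hi₂⟩ : ∃ i, σ i ≠ i ∧ σ i ≠ τ i := by
      by_contra! h
      exact hσ' (Perm.eq_one_or_eq_of_forall_apply_eq_or_eq exists_pow_finRotate_apply_eq
        fun i => or_iff_not_imp_left.mpr (h i))
    refine smul_eq_zero_of_right _ (Finset.prod_eq_zero (Finset.mem_univ i) ?_)
    rw [transpose_apply, hentry, if_neg (Ne.symm hi₁), if_neg (Ne.symm hi₂), add_zero]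
  rw [← det_transpose, det_apply, ← Finset.sum_subset (Finset.subset_univ _) hsupp,
    Finset.sum_pair (fun h => hτ 0 (by rw [← h]; rfl))]
  simp [hentry, τ, sign_finRotate, Units.smul_def]

theorem Matrix.transpose_permMatrix_mul_smul_one_add_mul_smul_one_add {R n : Type*} [CommRing R]
    [Fintype n] [DecidableEq n] (σ : Perm n) {x y : R} (h : x * y = 1) :
    (σ.permMatrix R)ᵀ * ((x • 1 + σ.permMatrix R) * (y • 1 + σ.permMatrix R)) =
      (x + y) • 1 + σ.permMatrix R + (σ.permMatrix R)ᵀ := by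
  have hPP : (σ.permMatrix R)ᵀ * σ.permMatrix R = 1 := by
    rw [transpose_permMatrix, ← permMatrix_mul, mul_inv_cancel, permMatrix_one]
  simp only [Matrix.mul_add, Matrix.add_mul, Matrix.smul_mul, Matrix.mul_smul, Matrix.one_mul,
    Matrix.mul_one, ← Matrix.mul_assoc, hPP]
  linear_combination (norm := module) h • (σ.permMatrix R)ᵀ

section CycleMat

variable {R : Type*} [CommRing R]

theorem cycleMat_map_intCast (m : ℕ) (a : ℤ) :
    (cycleMat (m + 1) a).map (Int.cast : ℤ → R) =
      (a : R) • 1 + (finRotate (m + 1)).permMatrix R + ((finRotate (m + 1)).permMatrix R)ᵀ := by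
  have hsucc : ∀ j k : Fin (m + 1), ((j : ℕ) + 1) % (m + 1) = k ↔ finRotate (m + 1) j = k := by
    intro j k
    simp [finRotate_apply, Fin.ext_iff, Fin.val_add]
  ext j k
  simp [cycleMat, hsucc, one_apply, PEquiv.toMatrix_apply, -transpose_permMatrix]

theorem det_cycleMat {x y : R} (h : x * y = 1) {a : ℤ} (ha : (a : R) = x + y) (m : ℕ) :
    ((cycleMat (m + 2) a).det : R) = x ^ (m + 2) + y ^ (m + 2) + 2 * (-1) ^ (m + 1) := by
  have hpow : (x * y) ^ (m + 2) = 1 := by rw [h, one_pow]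
  have hsign : ((-1 : R) ^ (m + 1)) ^ 2 = 1 := by rw [← pow_mul, pow_mul', neg_one_sq, one_pow]
  rw [Int.cast_det, cycleMat_map_intCast, ha,
    ← transpose_permMatrix_mul_smul_one_add_mul_smul_one_add _ h, det_mul, det_mul, det_transpose,
    det_permutation, sign_finRotate, det_smul_one_add_permMatrix_finRotate,
    det_smul_one_add_permMatrix_finRotate]
  push_cast
  linear_combination
    (-1 : R) ^ (m + 1) * hpow + (x ^ (m + 2) + y ^ (m + 2) + (-1) ^ (m + 1)) * hsign

end CycleMat

open Polynomial Chebyshev in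
theorem stmt_16_general (a : ℤ) (n : ℕ) (hn : 2 ≤ n) :
    ∃ h : Polynomial ℤ,
      (cycleMat n a).det = (if Odd n then a + 2 else a ^ 2 - 4) * (h.eval a) ^ 2 := by
  obtain ⟨m, rfl⟩ := Nat.exists_eq_add_of_le' hn
  obtain ⟨x, y, hxy, hsum⟩ := IsAlgClosed.exists_mul_eq_one_and_add_eq (a : ℂ)
  have hdet := det_cycleMat hxy hsum.symm m
  have hcast (p : ℤ[X]) : ((p.eval a : ℤ) : ℂ) = (p.map (Int.castRingHom ℂ)).eval (x + y) := by
    rw [hsum, eval_intCast_map, eq_intCast, Int.cast_id]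
  obtain ⟨r, rfl | rfl⟩ := Nat.even_or_odd' m
  · refine ⟨S ℤ r, ?_⟩
    rw [if_neg (by grind)]
    apply Int.cast_injective (α := ℂ)
    rw [hdet]
    push_cast
    rw [hcast, map_S, ← hsum, (by grind : Odd (2 * r + 1)).neg_one_pow]
    linear_combination pow_add_pow_sub_two_eq_mul_S_eval_sq hxy r
  · refine ⟨S ℤ (r + 1 : ℕ) - S ℤ r, ?_⟩
    rw [if_pos (by grind)]
    apply Int.cast_injective (α := ℂ)
    rw [hdet]
    push_cast
    rw [hcast, Polynomial.map_sub, map_S, map_S, ← hsum,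
      (by grind : Even (2 * r + 1 + 1)).neg_one_pow]
    have key := pow_add_pow_add_two_eq_mul_S_sub_S_eval_sq hxy (r + 1)
    push_cast [add_sub_cancel_right] at key
    linear_combination key

/-- det(B_n(a)) = (a+2)·h(a)² for odd n and (a²-4)·h(a)² for even n,
    for some integer polynomial h. -/
theorem stmt_16 (a : ℤ) (ha : 2 < a) (n : ℕ) (hn : 2 ≤ n) :
    ∃ h : Polynomial ℤ,
      (cycleMat n a).det = (if Odd n then a + 2 else a ^ 2 - 4) * (h.eval a) ^ 2 :=
  stmt_16_general a n hn
end
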